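/- For every prime p and integer k ≥ 1 there is an integer N such that every simple GF(p)-representable matroid of rank at least N with girth at least five contains a rank-k flat that is an independent set. -/

import Mathlib

open Matroid Set

namespace SGK

variable {α : Type*}

/-- The rank of a set `X` in a matroid `M`, as a value in `ℕ∞`. -/
noncomputable def rk (M : Matroid α) (X : Set α) : ℕ∞ :=
  sSup {n : ℕ∞ | ∃ I, M.Indep I ∧ I ⊆ X ∧ I.encard = n}

/-- The rank of a matroid. -/
noncomputable def Rank (M : Matroid α) : ℕ∞ := rk M M.E

/-- A matroid is simple if it has no loops and no parallel pairs,
equivalently every set of at most two ground elements is independent. -/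
def Simple (M : Matroid α) : Prop := ∀ e ∈ M.E, ∀ f ∈ M.E, M.Indep {e, f}

/-- `M` is representable over the field `F`: there is a map from the ground set to a
finite-dimensional `F`-vector space whose linear independence structure matches `M`. -/
def IsRep (F : Type*) [Field F] (M : Matroid α) : Prop :=
  ∃ (n : ℕ) (v : α → (Fin n → F)),
    ∀ I ⊆ M.E, (M.Indep I ↔ LinearIndependent F (I.restrict v))

/-- The points (rank-1 flats) of `M` contained in the set `X`. -/
def points (M : Matroid α) (X : Set α) : Set (Set α) :=
  {P | M.IsFlat P ∧ P ⊆ X ∧ rk M P = 1}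

/-- A line of `M` is a rank-2 flat. -/
def IsLine (M : Matroid α) (L : Set α) : Prop := M.IsFlat L ∧ rk M L = 2

/-- A circuit is a minimal dependent set. -/
def Circuit (M : Matroid α) (C : Set α) : Prop := Minimal M.Dep C

/-- A coloop is an element contained in every base. -/
def Coloop (M : Matroid α) (e : α) : Prop := ∀ B, M.IsBase B → e ∈ B

/-- Contraction of the set `C`, defined by duality: `M ／ C = (M✶ ＼ C)✶`. -/
def con (M : Matroid α) (C : Set α) : Matroid α := (M✶ ↾ (M.E \ C))✶

/-- A matroid is connected if it is nonempty and cannot be written as the direct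
sum of two nonempty matroids. -/
def Connected (M : Matroid α) : Prop :=
  M.E.Nonempty ∧ ¬ ∃ A B : Set α, A ∪ B = M.E ∧ Disjoint A B ∧ A.Nonempty ∧ B.Nonempty ∧
    ∀ I ⊆ M.E, M.Indep (I ∩ A) → M.Indep (I ∩ B) → M.Indep I

/-- `M` is isomorphic to the affine geometry `AG(d, F)` (of rank `d + 1`): its ground
set is in bijection with the affine space `F^d` in a way matching affine independence. -/
def IsAG (F : Type*) [Field F] (d : ℕ) (M : Matroid α) : Prop :=
  ∃ v : α → (Fin d → F),
    (∀ I ⊆ M.E, (M.Indep I ↔ AffineIndependent F (I.restrict v))) ∧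
    Set.InjOn v M.E ∧
    (∀ w : Fin d → F, ∃ e ∈ M.E, v e = w)

/-- `M` is isomorphic to the projective geometry `PG(k-1, F)` (of rank `k`): its ground
set is in bijection with the set of one-dimensional subspaces of `F^k`, matching
linear independence. -/
def IsPG (F : Type*) [Field F] (k : ℕ) (M : Matroid α) : Prop :=
  ∃ v : α → (Fin k → F),
    (∀ I ⊆ M.E, (M.Indep I ↔ LinearIndependent F (I.restrict v))) ∧
    (∀ e ∈ M.E, v e ≠ 0) ∧
    (∀ e ∈ M.E, ∀ f ∈ M.E,
      Submodule.span F {v e} = Submodule.span F {v f} → e = f) ∧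
    (∀ w : Fin k → F, w ≠ 0 → ∃ e ∈ M.E, Submodule.span F {w} = Submodule.span F {v e})

end SGK

/-!
A representation `v` of `M` over `GF(p)` turns girth at least five into the statement that any
four vectors of `A = v '' M.E` are linearly independent. Grow a linearly independent `S ⊆ A`
that is closed in `A` (`A ∩ span S ⊆ S`) one vector at a time. If no `e ∈ A \ S` keeps
`insert e S` closed, every such `e` has a partner `x = c • e + z ∈ A`, `x ≠ e`, with `c ≠ 0` and
`z ∈ span S`. Two vectors `e ≠ e'` with the same `(c, z)` satisfy `x - x' = c • (e - e')`, which
four-wise independence only allows when `x = e'`; so `e ↦ (c, z)` is at most two-to-one and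
`|A \ S| ≤ 2 p ^ (|S| + 1)`. Hence `|A| > 2 p ^ (k + 1) + k` lets the construction reach
`|S| = k`, and the preimage of `S` is an independent flat of rank `k`.
-/

lemma Set.encard_le_natCard_mul_of_encard_fiber_le {α β : Type*} [Finite β] (f : α → β)
    (s : Set α) {n : ℕ∞} (h : ∀ y, (s ∩ f ⁻¹' {y}).encard ≤ n) :
    s.encard ≤ Nat.card β * n := by
  have := Fintype.ofFinite β
  calc s.encard ≤ (⋃ y, s ∩ f ⁻¹' {y}).encard :=
        encard_mono fun x hx ↦ mem_iUnion.2 ⟨f x, hx, rfl⟩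
    _ ≤ ∑ y, (s ∩ f ⁻¹' {y}).encard := encard_iUnion_le_of_fintype _
    _ ≤ ∑ _y : β, n := Finset.sum_le_sum fun y _ ↦ h y
    _ = Nat.card β * n := by simp [Nat.card_eq_fintype_card]

lemma Submodule.natCard_span_le_pow {F V : Type*} [Field F] [Finite F] [AddCommGroup V]
    [Module F V] {S : Set V} {j : ℕ} (hS : S.encard = j) :
    Nat.card (Submodule.span F S) ≤ Nat.card F ^ j := by
  have hfin := Set.finite_of_encard_eq_coe hS
  have := hfin.fintype
  have := FiniteDimensional.span_of_finite F hfin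
  rw [Module.natCard_eq_pow_finrank (K := F)]
  refine Nat.pow_le_pow_right Nat.card_pos ((finrank_span_le_card S).trans_eq ?_)
  rw [← Set.ncard_eq_toFinset_card', Set.ncard_def, hS, ENat.toNat_natCast]

namespace SGK

section Vectors

variable {V : Type*} [AddCommGroup V]

def SmallSubsetsIndep (F : Type*) [Field F] [Module F V] (A : Set V) : Prop :=
  ∀ s ⊆ A, s.encard ≤ 4 → LinearIndepOn F id s

def IsFlatIn (F : Type*) [Field F] [Module F V] (A S : Set V) : Prop :=
  A ∩ Submodule.span F S ⊆ S

variable {F : Type*} [Field F] [Module F V] {A S : Set V}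

lemma SmallSubsetsIndep.zero_notMem (hA : SmallSubsetsIndep F A) : (0 : V) ∉ A := fun h0 ↦
  (linearIndepOn_singleton_iff F).mp (hA {0} (singleton_subset_iff.mpr h0) (by simp)) rfl

lemma SmallSubsetsIndep.eq_of_sub_eq_smul_sub (hA : SmallSubsetsIndep F A) {a b c d : V}
    (ha : a ∈ A) (hb : b ∈ A) (hc : c ∈ A) (hd : d ∈ A) {t : F} (ht : t ≠ 0) (hcd : c ≠ d)
    (h : a - b = t • (c - d)) : (a = c ∧ b = d) ∨ (a = d ∧ b = c) := by
  classical
  have hs : ({a, b, c, d} : Set V).encard ≤ 4 := by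
    grw [encard_insert_le, encard_insert_le, encard_insert_le, encard_singleton]; norm_num
  have hind := linearIndepOn_iff.mp (hA _ (by simp [insert_subset_iff, ha, hb, hc, hd]) hs)
  set l : V →₀ F := Finsupp.single a 1 - Finsupp.single b 1 - Finsupp.single c t +
    Finsupp.single d t
  have hl : l = 0 := by
    refine hind l ?_ ?_
    · refine add_mem (sub_mem (sub_mem ?_ ?_) ?_) ?_ <;>
        exact Finsupp.single_mem_supported F _ (by simp)
    · simp [l, h, smul_sub]
  have hlc := congrArg (· c) hl
  have hld := congrArg (· d) hl
  simp only [l, Finsupp.coe_add, Finsupp.coe_sub, Pi.add_apply, Pi.sub_apply,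
    Finsupp.single_apply, Finsupp.coe_zero, Pi.zero_apply, if_neg hcd, if_neg hcd.symm]
    at hlc hld
  split_ifs at hlc hld <;> grind

lemma exists_smul_add_of_not_isFlatIn_insert (hS : IsFlatIn F A S) {e : V}
    (he : ¬ IsFlatIn F A (insert e S)) :
    ∃ x ∈ A, x ≠ e ∧ ∃ c : F, c ≠ 0 ∧ ∃ z : Submodule.span F S, x = c • e + z := by
  obtain ⟨x, ⟨hxA, hx⟩, hxe⟩ := not_subset.mp he
  obtain ⟨c, z, hz, rfl⟩ := Submodule.mem_span_insert.mp hx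
  refine ⟨_, hxA, fun h ↦ hxe (by rw [h]; exact mem_insert _ _), c, fun hc ↦ hxe ?_, ⟨z, hz⟩, rfl⟩
  subst hc
  exact mem_insert_of_mem _ (hS ⟨hxA, by simpa using hz⟩)

variable [Finite F]

lemma encard_diff_le_of_forall_not_isFlatIn_insert (hA : SmallSubsetsIndep F A)
    (hS : IsFlatIn F A S) {j : ℕ} (hSj : S.encard = j)
    (hbad : ∀ e ∈ A \ S, ¬ IsFlatIn F A (insert e S)) :
    (A \ S).encard ≤ (2 * Nat.card F ^ (j + 1) : ℕ) := by
  have key := fun e (he : e ∈ A \ S) ↦ exists_smul_add_of_not_isFlatIn_insert hS (hbad e he)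
  choose! x hxA hxe c hc z hxz using key
  have hfiber : ∀ y, ((A \ S) ∩ (fun e ↦ (c e, z e)) ⁻¹' {y}).encard ≤ 2 := by
    intro y
    rcases eq_empty_or_nonempty ((A \ S) ∩ (fun e ↦ (c e, z e)) ⁻¹' {y})
      with h | ⟨e₁, he₁, hy₁⟩
    · simp [h]
    calc _ ≤ ({e₁, x e₁} : Set V).encard := encard_mono ?_
      _ ≤ 2 := (encard_insert_le _ _).trans (by rw [encard_singleton, one_add_one_eq_two])
    rintro e ⟨he, hy⟩
    obtain rfl | hne := eq_or_ne e₁ e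
    · exact mem_insert _ _
    simp only [mem_preimage, mem_singleton_iff] at hy₁ hy
    have hce : c e = c e₁ := congrArg Prod.fst (hy.trans hy₁.symm)
    have hze : z e = z e₁ := congrArg Prod.snd (hy.trans hy₁.symm)
    have hsub : x e₁ - x e = c e₁ • (e₁ - e) := by
      rw [hxz e₁ he₁, hxz e he, hce, hze, smul_sub]; abel
    rcases hA.eq_of_sub_eq_smul_sub (hxA e₁ he₁) (hxA e he) he₁.1 he.1 (hc e₁ he₁) hne hsub
      with ⟨h, -⟩ | ⟨h, -⟩
    · exact absurd h (hxe e₁ he₁)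
    · exact mem_insert_of_mem _ h.symm
  have := Module.finite_iff_finite.mp
    (FiniteDimensional.span_of_finite F (finite_of_encard_eq_coe hSj))
  calc (A \ S).encard ≤ Nat.card (F × Submodule.span F S) * 2 :=
        encard_le_natCard_mul_of_encard_fiber_le _ _ hfiber
    _ ≤ (2 * Nat.card F ^ (j + 1) : ℕ) := by
        rw [Nat.card_prod, pow_succ', mul_comm]
        exact_mod_cast Nat.mul_le_mul_left 2
          (Nat.mul_le_mul_left _ (Submodule.natCard_span_le_pow hSj))

theorem exists_isFlatIn_linearIndepOn (hA : SmallSubsetsIndep F A) (k : ℕ)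
    (hbig : ((2 * Nat.card F ^ (k + 1) + k : ℕ) : ℕ∞) < A.encard) :
    ∃ S ⊆ A, S.encard = k ∧ LinearIndepOn F id S ∧ IsFlatIn F A S := by
  induction k with
  | zero =>
    refine ⟨∅, empty_subset _, encard_empty, linearIndepOn_empty F id, ?_⟩
    rintro x ⟨hxA, hx⟩
    rw [Submodule.span_empty, SetLike.mem_coe, Submodule.mem_bot] at hx
    exact hA.zero_notMem (hx ▸ hxA)
  | succ k ih =>
    have hpow : Nat.card F ^ (k + 1) ≤ Nat.card F ^ (k + 1 + 1) :=
      Nat.pow_le_pow_right Nat.card_pos (by omega)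
    obtain ⟨S, hSA, hSk, hSi, hS⟩ := ih (lt_of_le_of_lt (by gcongr; omega) hbig)
    have hdiff : ((2 * Nat.card F ^ (k + 1) : ℕ) : ℕ∞) < (A \ S).encard := by
      by_contra! h
      refine hbig.not_ge ?_
      rw [← encard_sdiff_add_encard_of_subset hSA, hSk]
      calc _ ≤ ((2 * Nat.card F ^ (k + 1) : ℕ) : ℕ∞) + k := by gcongr
        _ ≤ _ := by norm_cast; omega
    obtain ⟨e, he, heS⟩ : ∃ e ∈ A \ S, IsFlatIn F A (insert e S) := by
      by_contra! h
      exact hdiff.not_ge (encard_diff_le_of_forall_not_isFlatIn_insert hA hS hSk h)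
    refine ⟨insert e S, insert_subset he.1 hSA, ?_,
      hSi.id_insert fun h ↦ he.2 (hS ⟨he.1, h⟩), heS⟩
    rw [encard_insert_of_notMem he.2, hSk]
    norm_cast

end Vectors

section Matroids

variable {α : Type*} {M : Matroid α}

lemma rk_eq_eRk (M : Matroid α) (X : Set α) : rk M X = M.eRk X := by
  refine le_antisymm (sSup_le ?_) ?_
  · rintro _ ⟨I, hI, hIX, rfl⟩
    exact hI.encard_le_eRk_of_subset hIX
  · obtain ⟨I, hI⟩ := M.exists_isBasis' X
    exact le_sSup ⟨I, hI.indep, hI.subset, hI.eRk_eq_encard.symm⟩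

lemma indep_of_encard_le_four (hM : ∀ C, Circuit M C → 5 ≤ C.encard) {X : Set α}
    (hXE : X ⊆ M.E) (hX : X.encard ≤ 4) : M.Indep X := by
  by_contra hX_dep
  obtain ⟨C, hCX, hC⟩ := (M.dep_of_not_indep hX_dep hXE).exists_isCircuit_subset
  have := (hM C hC).trans ((encard_mono hCX).trans hX)
  norm_num at this

variable {F V : Type*} [Field F] [AddCommGroup V] [Module F V] {v : α → V}
  (hv : ∀ I ⊆ M.E, M.Indep I ↔ LinearIndepOn F v I)
include hv

lemma injOn_of_simple (hM : Simple M) : InjOn v M.E := fun e he f hf hef ↦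
  ((hv _ (pair_subset he hf)).mp (hM e he f hf)).injOn (mem_insert _ _)
    (mem_insert_of_mem _ rfl) hef

variable (hinj : InjOn v M.E)
include hinj

lemma indep_iff_linearIndepOn_image {I : Set α} (hI : I ⊆ M.E) :
    M.Indep I ↔ LinearIndepOn F id (v '' I) :=
  (hv I hI).trans (linearIndepOn_iff_image (hinj.mono hI))

lemma smallSubsetsIndep_image (hM : ∀ C, Circuit M C → 5 ≤ C.encard) :
    SmallSubsetsIndep F (v '' M.E) := by
  intro s hs hs4
  have himage : v '' (M.E ∩ v ⁻¹' s) = s := by rw [image_inter_preimage, inter_eq_right.mpr hs]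
  rw [← himage, ← indep_iff_linearIndepOn_image hv hinj inter_subset_left]
  refine indep_of_encard_le_four hM inter_subset_left ?_
  rwa [← (hinj.mono inter_subset_left).encard_image, himage]

variable {S : Set V} (hSE : S ⊆ v '' M.E) (hSi : LinearIndepOn F id S)
include hSE hSi

lemma indep_inter_preimage : M.Indep (M.E ∩ v ⁻¹' S) := by
  rwa [indep_iff_linearIndepOn_image hv hinj inter_subset_left, image_inter_preimage,
    inter_eq_right.mpr hSE]

lemma isFlat_inter_preimage (hS : IsFlatIn F (v '' M.E) S) : M.IsFlat (M.E ∩ v ⁻¹' S) := by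
  have hI := indep_inter_preimage hv hinj hSE hSi
  refine isFlat_iff_closure_eq.mpr (subset_antisymm (fun e he ↦ ?_) (M.subset_closure _))
  obtain ⟨heE, he⟩ := hI.mem_closure_iff'.mp he
  by_contra heS
  have hveS : v e ∉ S := fun h ↦ heS ⟨heE, h⟩
  refine heS (he ((indep_iff_linearIndepOn_image hv hinj
    (insert_subset heE inter_subset_left)).mpr ?_))
  rw [image_insert_eq, image_inter_preimage, inter_eq_right.mpr hSE]
  exact hSi.id_insert fun h ↦ hveS (hS ⟨mem_image_of_mem v heE, h⟩)

end Matroids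

end SGK

theorem stmt_14_general (p k : ℕ) [Fact p.Prime] :
    ∃ N : ℕ, ∀ (α : Type) (M : Matroid α), SGK.Simple M → SGK.IsRep (ZMod p) M →
      (N : ℕ∞) ≤ SGK.Rank M →
      (∀ C, SGK.Circuit M C → 5 ≤ C.encard) →
      ∃ Fl, M.IsFlat Fl ∧ SGK.rk M Fl = (k : ℕ∞) ∧ M.Indep Fl := by
  refine ⟨2 * p ^ (k + 1) + k + 1, fun α M hM ⟨n, v, hv⟩ hN hG ↦ ?_⟩
  replace hv : ∀ I ⊆ M.E, M.Indep I ↔ LinearIndepOn (ZMod p) v I := hv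
  have hinj := SGK.injOn_of_simple hv hM
  rw [SGK.Rank, SGK.rk_eq_eRk, Matroid.le_eRk_iff] at hN
  obtain ⟨I, hIE, -, hI⟩ := hN
  have hbig : ((2 * Nat.card (ZMod p) ^ (k + 1) + k : ℕ) : ℕ∞) < (v '' M.E).encard := by
    rw [Nat.card_zmod]
    calc _ < ((2 * p ^ (k + 1) + k + 1 : ℕ) : ℕ∞) := Nat.cast_lt.mpr (Nat.lt_succ_self _)
      _ = (v '' I).encard := by rw [(hinj.mono hIE).encard_image, hI]
      _ ≤ (v '' M.E).encard := encard_mono (image_mono hIE)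
  obtain ⟨S, hSE, hSk, hSi, hS⟩ :=
    SGK.exists_isFlatIn_linearIndepOn (SGK.smallSubsetsIndep_image hv hinj hG) k hbig
  have hFl := SGK.indep_inter_preimage hv hinj hSE hSi
  refine ⟨_, SGK.isFlat_inter_preimage hv hinj hSE hSi hS, ?_, hFl⟩
  rw [SGK.rk_eq_eRk, hFl.eRk_eq_encard, ← (hinj.mono inter_subset_left).encard_image,
    image_inter_preimage, inter_eq_right.mpr hSE, hSk]

/-- For every prime `p` and `k ≥ 1` there is `N` such that every simple
`GF(p)`-representable matroid of rank at least `N` with girth at least five contains a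
rank-`k` independent flat. -/
theorem stmt_14 (p k : ℕ) [Fact p.Prime] (hk : 1 ≤ k) :
    ∃ N : ℕ, ∀ (α : Type) (M : Matroid α), SGK.Simple M → SGK.IsRep (ZMod p) M →
      (N : ℕ∞) ≤ SGK.Rank M →
      (∀ C, SGK.Circuit M C → 5 ≤ C.encard) →
      ∃ Fl, M.IsFlat Fl ∧ SGK.rk M Fl = (k : ℕ∞) ∧ M.Indep Fl :=
  stmt_14_general p k
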